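/- arXiv:2307.15834 — 2 statements merged into one kernel-verified Lean document; each statement's English description precedes it below -/
import Mathlib

section
/- Let G be a compact group acting measurably on X with a measurable orbit selector γ : X → X (so γ(g·x) = γ(x) and γ(x) lies in the orbit of x). If P is a G-invariant probability measure on X, X ∼ P, G ∼ λ (normalized Haar) with G independent of X, then the pair (X, γ(X)) has the same joint distribution as (G·γ(X), γ(X)). -/
/-!
Since `P` is `G`-invariant, `X` has the same law as `G • X`, and `γ (G • X) = γ X`; so
`(X, γ X)` is distributed as `(G • X, γ X)`. Conditionally on `X = x`, the points `G • x`
and `G • γ x` have the same law: `γ x = h • x` for some `h`, and `μ` is invariant under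
`g ↦ g * h`.
-/

open MeasureTheory Measure

section

variable {G X : Type*} [MeasurableSpace G] [MeasurableSpace X]

theorem map_smul_prod_eq_self [SMul G X] [MeasurableSMul₂ G X] (μ : Measure G)
    [IsProbabilityMeasure μ] (P : Measure X) [SFinite P] (hP : ∀ g : G, map (g • ·) P = P) :
    map (fun p : G × X => p.1 • p.2) (μ.prod P) = P := by
  have hsmul : Measurable fun p : G × X => p.1 • p.2 := measurable_smul
  ext s hs
  have hfiber (g : G) : P (Prod.mk g ⁻¹' ((fun p : G × X => p.1 • p.2) ⁻¹' s)) = P s := by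
    change P ((g • ·) ⁻¹' s) = P s
    rw [← map_apply (measurable_const_smul g) hs, hP g]
  rw [map_apply hsmul hs, prod_apply (hsmul hs)]
  simp only [hfiber, lintegral_const, measure_univ, mul_one]

theorem map_smul_eq_of_mem_orbit [Group G] [MeasurableMul G] [MulAction G X]
    [MeasurableSMul G X] (μ : Measure G) [μ.IsMulRightInvariant] {x y : X}
    (hy : y ∈ MulAction.orbit G x) :
    map (· • y) μ = map (· • x) μ := by
  obtain ⟨h, rfl⟩ := hy
  calc map (· • h • x) μ = map ((· • x) ∘ (· * h)) μ := by
        simp only [Function.comp_def, mul_smul]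
    _ = map (· • x) (map (· * h) μ) :=
        (map_map (measurable_smul_const x) (measurable_mul_const h)).symm
    _ = map (· • x) μ := by rw [map_mul_right_eq_self]

end

theorem map_prod_eq_of_forall_map_left_eq {α β γ : Type*} [MeasurableSpace α]
    [MeasurableSpace β] [MeasurableSpace γ] (μ : Measure α) [SFinite μ] (ν : Measure β) [SFinite ν]
    {f f' : α × β → γ} (hf : Measurable f) (hf' : Measurable f')
    (h : ∀ b, map (fun a => f (a, b)) μ = map (fun a => f' (a, b)) μ) :
    map f (μ.prod ν) = map f' (μ.prod ν) := by
  ext s hs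
  rw [map_apply hf hs, map_apply hf' hs, prod_apply_symm (hf hs), prod_apply_symm (hf' hs)]
  refine lintegral_congr fun b => ?_
  have hfb : Measurable fun a => f (a, b) := hf.comp measurable_prodMk_right
  have hfb' : Measurable fun a => f' (a, b) := hf'.comp measurable_prodMk_right
  have hb := DFunLike.congr_fun (h b) s
  rw [map_apply hfb hs, map_apply hfb' hs] at hb
  exact hb

theorem invariant_pair_eq_smul_orbitSelector_general {G X : Type*} [Group G] [TopologicalSpace G]
    [IsTopologicalGroup G] [MeasurableSpace G] [BorelSpace G]
    [MulAction G X] [MeasurableSpace X] [MeasurableSMul₂ G X]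
    (μ : Measure G) [IsProbabilityMeasure μ] [μ.IsMulRightInvariant]
    (γ : X → X) (hγmeas : Measurable γ)
    (hγinv : ∀ (g : G) (x : X), γ (g • x) = γ x)
    (hγorb : ∀ x : X, γ x ∈ MulAction.orbit G x)
    (P : Measure X) [IsProbabilityMeasure P]
    (hP : ∀ g : G, Measure.map (fun x => g • x) P = P) :
    Measure.map (fun x => (x, γ x)) P
      = Measure.map (fun p : G × X => (p.1 • γ p.2, γ p.2)) (μ.prod P) := by
  have hsmul : Measurable fun p : G × X => p.1 • p.2 := measurable_smul
  have hγsnd : Measurable fun p : G × X => γ p.2 := hγmeas.comp measurable_snd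
  calc map (fun x => (x, γ x)) P
      = map ((fun x => (x, γ x)) ∘ fun p : G × X => p.1 • p.2) (μ.prod P) := by
        rw [← map_map (measurable_id'.prodMk hγmeas) hsmul, map_smul_prod_eq_self μ P hP]
    _ = map (fun p : G × X => (p.1 • p.2, γ p.2)) (μ.prod P) := by
        simp only [Function.comp_def, hγinv]
    _ = map (fun p : G × X => (p.1 • γ p.2, γ p.2)) (μ.prod P) := by
        refine map_prod_eq_of_forall_map_left_eq μ P (hsmul.prodMk hγsnd)
          ((measurable_fst.smul hγsnd).prodMk hγsnd) fun x => ?_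
        simpa only [map_map measurable_prodMk_right (measurable_smul_const _),
          Function.comp_def] using
          congrArg (map fun y => (y, γ x)) (map_smul_eq_of_mem_orbit μ (hγorb x)).symm

/-- If `P` is a `G`-invariant probability measure, `X ∼ P`, and `G ∼ μ` (normalized Haar)
is independent of `X`, then `(X, γ(X))` has the same joint distribution as
`(G • γ(X), γ(X))`, where `γ` is a measurable orbit selector. -/
theorem invariant_pair_eq_smul_orbitSelector {G X : Type*} [Group G] [TopologicalSpace G]
    [IsTopologicalGroup G] [CompactSpace G] [MeasurableSpace G] [BorelSpace G]
    [MulAction G X] [MeasurableSpace X] [MeasurableSMul₂ G X]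
    (μ : Measure G) [IsProbabilityMeasure μ] [μ.IsMulLeftInvariant] [μ.IsMulRightInvariant]
    (γ : X → X) (hγmeas : Measurable γ)
    (hγinv : ∀ (g : G) (x : X), γ (g • x) = γ x)
    (hγorb : ∀ x : X, γ x ∈ MulAction.orbit G x)
    (P : Measure X) [IsProbabilityMeasure P]
    (hP : ∀ g : G, Measure.map (fun x => g • x) P = P) :
    Measure.map (fun x => (x, γ x)) P
      = Measure.map (fun p : G × X => (p.1 • γ p.2, γ p.2)) (μ.prod P) :=
  invariant_pair_eq_smul_orbitSelector_general μ γ hγmeas hγinv hγorb P hP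
end

section
/- Let k be a reproducing kernel on X that is equivariant with respect to a compact group G with Haar measure λ in the sense that ∫_G k(g·x, x') λ(dg) = ∫_G k(x, g·x') λ(dg) for all x, x'. Then for any probability measure P on X with orbit average P°, the squared maximum mean discrepancy satisfies MMD²(P, P°) = ∬ k(x,x') P(dx)P(dx') − ∬∫_G k(x, g·x') λ(dg) P(dx)P(dx'). -/
open MeasureTheory

/-! Averaging over `G` twice is the same as averaging once: by equivariance the orbit average
`∫_G k(g·x, h·y) dμ(h)` does not depend on `g` (right invariance of `μ` absorbs the shift), so
integrating it in `g` against the probability measure `μ` returns `∫_G k(x, h·y) dμ(h)`. Hence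
`∬ k dP° dP° = ∬ k dP dP°`, and the expansion of `MMD²(P, P°)` collapses. -/

section

variable {G X E : Type*} [Group G] [MeasurableSpace G] [MeasurableMul G] [MulAction G X]
  [NormedAddCommGroup E] [NormedSpace ℝ E] {μ : Measure G}

theorem integral_smul_smul_eq_integral_smul [μ.IsMulRightInvariant] (f : X → E) (g : G)
    (x : X) : ∫ h, f (h • g • x) ∂μ = ∫ h, f (h • x) ∂μ := by
  simp only [smul_smul]
  exact integral_mul_right_eq_self (fun h => f (h • x)) g

variable {k : X → X → ℝ}
  (hequiv : ∀ x x' : X, ∫ g, k (g • x) x' ∂μ = ∫ g, k x (g • x') ∂μ)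
include hequiv

theorem integral_kernel_smul_left_eq [μ.IsMulRightInvariant] (g : G) (x y : X) :
    ∫ h, k (g • x) (h • y) ∂μ = ∫ h, k x (h • y) ∂μ :=
  calc ∫ h, k (g • x) (h • y) ∂μ = ∫ h, k (h • g • x) y ∂μ := (hequiv _ _).symm
    _ = ∫ h, k (h • x) y ∂μ := integral_smul_smul_eq_integral_smul (k · y) g x
    _ = ∫ h, k x (h • y) ∂μ := hequiv x y

theorem integral_integral_kernel_smul_smul_eq [IsProbabilityMeasure μ] [μ.IsMulRightInvariant]
    (x y : X) : ∫ g, ∫ h, k (g • x) (h • y) ∂μ ∂μ = ∫ g, k x (g • y) ∂μ := by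
  simp only [integral_kernel_smul_left_eq hequiv, integral_const, probReal_univ, one_smul]

end

theorem mmd_orbitAverage_equivariant_kernel_general {G X : Type*} [Group G] [TopologicalSpace G]
    [IsTopologicalGroup G] [MeasurableSpace G] [BorelSpace G]
    [MulAction G X] [MeasurableSpace X]
    (μ : Measure G) [IsProbabilityMeasure μ] [μ.IsMulRightInvariant]
    (P : Measure X)
    (k : X → X → ℝ)
    (hequiv : ∀ x x' : X, ∫ g, k (g • x) x' ∂μ = ∫ g, k x (g • x') ∂μ) :
    (∫ x, ∫ y, k x y ∂P ∂P)
        + (∫ x, ∫ y, ∫ g, ∫ h, k (g • x) (h • y) ∂μ ∂μ ∂P ∂P)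
        - 2 * ∫ x, ∫ y, ∫ g, k x (g • y) ∂μ ∂P ∂P
      = (∫ x, ∫ y, k x y ∂P ∂P) - ∫ x, ∫ y, ∫ g, k x (g • y) ∂μ ∂P ∂P := by
  simp only [integral_integral_kernel_smul_smul_eq hequiv]
  ring

/-- For a kernel `k` equivariant with respect to the Haar measure `μ` of a compact group `G`
(`∫_G k(g·x, x') dμ = ∫_G k(x, g·x') dμ`), the squared MMD between `P` and its orbit average
`P°` satisfies `MMD²(P, P°) = ∬ k dP dP − ∬ ∫_G k(x, g·x') dμ dP dP`.  The left-hand side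
below is the expansion `∬ k dP dP + ∬ k dP° dP° − 2 ∬ k dP dP°` written via `μ`. -/
theorem mmd_orbitAverage_equivariant_kernel {G X : Type*} [Group G] [TopologicalSpace G]
    [IsTopologicalGroup G] [CompactSpace G] [MeasurableSpace G] [BorelSpace G]
    [MulAction G X] [MeasurableSpace X] [MeasurableSMul₂ G X]
    (μ : Measure G) [IsProbabilityMeasure μ] [μ.IsMulLeftInvariant] [μ.IsMulRightInvariant]
    (P : Measure X) [IsProbabilityMeasure P]
    (k : X → X → ℝ) (hk : Measurable (Function.uncurry k))
    (hbd : ∃ C : ℝ, ∀ x y : X, |k x y| ≤ C)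
    (hequiv : ∀ x x' : X, ∫ g, k (g • x) x' ∂μ = ∫ g, k x (g • x') ∂μ) :
    (∫ x, ∫ y, k x y ∂P ∂P)
        + (∫ x, ∫ y, ∫ g, ∫ h, k (g • x) (h • y) ∂μ ∂μ ∂P ∂P)
        - 2 * ∫ x, ∫ y, ∫ g, k x (g • y) ∂μ ∂P ∂P
      = (∫ x, ∫ y, k x y ∂P ∂P) - ∫ x, ∫ y, ∫ g, k x (g • y) ∂μ ∂P ∂P :=
  mmd_orbitAverage_equivariant_kernel_general μ P k hequiv
end
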